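/- Let α ∈ (0,2), m ∈ (0,α), ρ_m(x) = (1+|x|²)^{m/2} on ℝ^d, and let A be a d×d real matrix with operator norm ‖A‖. Then for every x ∈ ℝ^d, the generator bound 𝓛_A^{(α)} ρ_m(x) ≤ (2π^{d/2}/Γ(d/2)) · (m/(2−α) + 2^{1+α}/(α−m)) · ‖A‖^α · (1+|x|²)^{(m−α)/2} holds, where 𝓛_A^{(α)} ρ_m(x) = (1/2)∫_{ℝ^d} [ρ_m(x+Az) + ρ_m(x−Az) − 2ρ_m(x)] |z|^{−d−α} dz. -/

import Mathlib

/-!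
Write `c = 1 + ‖x‖²` and `w = A z`. Tangent lines of the concave map `t ↦ t ^ (m / 2)` at the
midpoint `c + ‖w‖²` cancel by the parallelogram law, so the second difference of `ρ_m` at `x`
in direction `w` is at most `2 ((c + ‖w‖²) ^ (m/2) - c ^ (m/2))`; a second tangent line at `c`,
respectively subadditivity of `t ↦ t ^ (m / 2)`, bounds this by `m c ^ (m/2 - 1) ‖A‖² ‖z‖²` and
by `2 ‖A‖ ^ m ‖z‖ ^ m`. Using the first bound for `‖z‖ < √c / ‖A‖` and the second beyond, the
integrand is dominated by a radial function that is a power of `‖z‖` on either side of this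
radius. Its integral in polar coordinates is `|S^{d-1}| (m / (2 - α) + 2 / (α - m)) ‖A‖ ^ α
c ^ ((m - α) / 2)`, and half of it is below the claimed bound since `1 ≤ 2 ^ (1 + α)`.
-/

open MeasureTheory Real Set Metric Module

lemma Real.rpow_le_rpow_add_mul_sub {p s t : ℝ} (hp0 : 0 ≤ p) (hp1 : p ≤ 1) (hs : 0 ≤ s)
    (ht : 0 < t) : s ^ p ≤ t ^ p + p * t ^ (p - 1) * (s - t) := by
  have hBernoulli : (s / t) ^ p ≤ 1 + p * (s / t - 1) := by
    simpa using rpow_one_add_le_one_add_mul_self (s := s / t - 1)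
      (by linarith [div_nonneg hs ht.le]) hp0 hp1
  rw [div_rpow hs ht.le, div_le_iff₀ (rpow_pos_of_pos ht p)] at hBernoulli
  calc s ^ p ≤ (1 + p * (s / t - 1)) * t ^ p := hBernoulli
    _ = t ^ p + p * (t ^ p / t) * (s - t) := by field_simp
    _ = t ^ p + p * t ^ (p - 1) * (s - t) := by rw [rpow_sub_one ht.ne']

section BracketPow

variable {F : Type*} [NormedAddCommGroup F] [InnerProductSpace ℝ F] {m : ℝ}

noncomputable def bracketPow (m : ℝ) (x : F) : ℝ := (1 + ‖x‖ ^ 2) ^ (m / 2)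

lemma bracketPow_add_add_bracketPow_sub_le (hm0 : 0 ≤ m) (hm2 : m ≤ 2) (x w : F) :
    bracketPow m (x + w) + bracketPow m (x - w) ≤ 2 * (1 + ‖x‖ ^ 2 + ‖w‖ ^ 2) ^ (m / 2) := by
  set t := 1 + ‖x‖ ^ 2 + ‖w‖ ^ 2
  have ht : 0 < t := by positivity
  have hpar : ‖x + w‖ ^ 2 + ‖x - w‖ ^ 2 = 2 * (‖x‖ ^ 2 + ‖w‖ ^ 2) := by
    simpa only [sq] using parallelogram_law_with_norm ℝ x w
  have hplus := rpow_le_rpow_add_mul_sub (p := m / 2) (s := 1 + ‖x + w‖ ^ 2) (by linarith)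
    (by linarith) (by positivity) ht
  have hminus := rpow_le_rpow_add_mul_sub (p := m / 2) (s := 1 + ‖x - w‖ ^ 2) (by linarith)
    (by linarith) (by positivity) ht
  have hcancel : m / 2 * t ^ (m / 2 - 1) * (1 + ‖x + w‖ ^ 2 - t)
      + m / 2 * t ^ (m / 2 - 1) * (1 + ‖x - w‖ ^ 2 - t) = 0 := by
    rw [← mul_add]; convert mul_zero _; linarith
  unfold bracketPow
  linarith

lemma bracketPow_second_diff_le_mul_sq (hm0 : 0 ≤ m) (hm2 : m ≤ 2) (x w : F) :
    bracketPow m (x + w) + bracketPow m (x - w) - 2 * bracketPow m x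
      ≤ m * (1 + ‖x‖ ^ 2) ^ (m / 2 - 1) * ‖w‖ ^ 2 := by
  have htangent := rpow_le_rpow_add_mul_sub (p := m / 2) (s := 1 + ‖x‖ ^ 2 + ‖w‖ ^ 2)
    (t := 1 + ‖x‖ ^ 2) (by linarith) (by linarith) (by positivity) (by positivity)
  have := bracketPow_add_add_bracketPow_sub_le hm0 hm2 x w
  unfold bracketPow at *
  linarith

lemma bracketPow_second_diff_le_rpow (hm0 : 0 ≤ m) (hm2 : m ≤ 2) (x w : F) :
    bracketPow m (x + w) + bracketPow m (x - w) - 2 * bracketPow m x ≤ 2 * ‖w‖ ^ m := by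
  have hsubadd := rpow_add_le_add_rpow (p := m / 2) (by positivity : 0 ≤ 1 + ‖x‖ ^ 2)
    (sq_nonneg ‖w‖) (by linarith) (by linarith)
  rw [← rpow_natCast_mul (norm_nonneg w), Nat.cast_ofNat, mul_div_cancel₀ _ two_ne_zero]
    at hsubadd
  have := bracketPow_add_add_bracketPow_sub_le hm0 hm2 x w
  unfold bracketPow at *
  linarith

end BracketPow

section BrokenPower

noncomputable def brokenPower (R K₁ s₁ K₂ s₂ r : ℝ) : ℝ :=
  if r < R then K₁ * r ^ s₁ else K₂ * r ^ s₂

variable {R K₁ s₁ K₂ s₂ : ℝ}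

lemma brokenPower_nonneg (hK₁ : 0 ≤ K₁) (hK₂ : 0 ≤ K₂) {r : ℝ} (hr : 0 ≤ r) :
    0 ≤ brokenPower R K₁ s₁ K₂ s₂ r := by
  unfold brokenPower; split_ifs <;> positivity

lemma brokenPower_of_lt {r : ℝ} (hr : r < R) : brokenPower R K₁ s₁ K₂ s₂ r = K₁ * r ^ s₁ :=
  if_pos hr

lemma brokenPower_of_le {r : ℝ} (hr : R ≤ r) : brokenPower R K₁ s₁ K₂ s₂ r = K₂ * r ^ s₂ :=
  if_neg (not_lt.2 hr)

lemma pow_smul_brokenPower_sub {n : ℕ} (hn : 1 ≤ n) {r : ℝ} (hr : 0 < r) :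
    r ^ (n - 1) • brokenPower R K₁ (s₁ - n) K₂ (s₂ - n) r
      = brokenPower R K₁ (s₁ - 1) K₂ (s₂ - 1) r := by
  have hpow (s : ℝ) : r ^ (n - 1) * r ^ (s - n) = r ^ (s - 1) := by
    rw [← rpow_natCast, Nat.cast_sub hn, Nat.cast_one, ← rpow_add hr]
    ring_nf
  unfold brokenPower
  split_ifs <;> rw [smul_eq_mul, mul_left_comm, hpow]

lemma integrableOn_Ioo_brokenPower (hR : 0 < R) (hs₁ : 0 < s₁) :
    IntegrableOn (brokenPower R K₁ (s₁ - 1) K₂ s₂) (Ioo 0 R) := by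
  refine IntegrableOn.congr_fun ?_ (fun r hr => (brokenPower_of_lt hr.2).symm) measurableSet_Ioo
  exact ((intervalIntegral.integrableOn_Ioo_rpow_iff hR).mpr (by linarith)).const_mul K₁

lemma integrableOn_Ici_brokenPower (hR : 0 < R) (hs₂ : s₂ < 0) :
    IntegrableOn (brokenPower R K₁ s₁ K₂ (s₂ - 1)) (Ici R) := by
  refine IntegrableOn.congr_fun ?_ (fun r hr => (brokenPower_of_le hr).symm) measurableSet_Ici
  exact IntegrableOn.congr_set_ae
    ((integrableOn_Ioi_rpow_of_lt (a := s₂ - 1) (by linarith) hR).const_mul K₂) Ioi_ae_eq_Ici.symm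

lemma integrableOn_Ioi_brokenPower (hR : 0 < R) (hs₁ : 0 < s₁) (hs₂ : s₂ < 0) :
    IntegrableOn (brokenPower R K₁ (s₁ - 1) K₂ (s₂ - 1)) (Ioi 0) := by
  rw [← Ioo_union_Ici_eq_Ioi hR]
  exact (integrableOn_Ioo_brokenPower hR hs₁).union (integrableOn_Ici_brokenPower hR hs₂)

lemma integral_Ioi_brokenPower (hR : 0 < R) (hs₁ : 0 < s₁) (hs₂ : s₂ < 0) :
    ∫ r in Ioi 0, brokenPower R K₁ (s₁ - 1) K₂ (s₂ - 1) r
      = K₁ * R ^ s₁ / s₁ - K₂ * R ^ s₂ / s₂ := by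
  have hlow : ∫ r in Ioo 0 R, brokenPower R K₁ (s₁ - 1) K₂ (s₂ - 1) r = K₁ * R ^ s₁ / s₁ := by
    rw [setIntegral_congr_fun measurableSet_Ioo (fun r hr => brokenPower_of_lt hr.2),
      integral_const_mul, ← integral_Ioc_eq_integral_Ioo, ← intervalIntegral.integral_of_le hR.le,
      integral_rpow (.inl (by linarith)), sub_add_cancel, zero_rpow hs₁.ne']
    ring
  have hhigh : ∫ r in Ici R, brokenPower R K₁ (s₁ - 1) K₂ (s₂ - 1) r = -(K₂ * R ^ s₂ / s₂) := by
    rw [setIntegral_congr_fun measurableSet_Ici (fun r hr => brokenPower_of_le hr),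
      integral_const_mul, integral_Ici_eq_integral_Ioi,
      integral_Ioi_rpow_of_lt (by linarith) hR, sub_add_cancel]
    ring
  have hdisj : Disjoint (Ioo 0 R) (Ici R) := (Iio_disjoint_Ici le_rfl).mono_left Ioo_subset_Iio_self
  rw [← Ioo_union_Ici_eq_Ioi hR, setIntegral_union hdisj measurableSet_Ici
    (integrableOn_Ioo_brokenPower hR hs₁) (integrableOn_Ici_brokenPower hR hs₂), hlow, hhigh,
    sub_eq_add_neg]

variable {E : Type*} [NormedAddCommGroup E] [NormedSpace ℝ E] [FiniteDimensional ℝ E]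
  [Nontrivial E] [MeasurableSpace E] [BorelSpace E] (μ : Measure E) [μ.IsAddHaarMeasure]

lemma integrable_brokenPower_norm (hR : 0 < R) (hs₁ : 0 < s₁) (hs₂ : s₂ < 0) :
    Integrable (fun z : E => brokenPower R K₁ (s₁ - finrank ℝ E) K₂ (s₂ - finrank ℝ E) ‖z‖)
      μ := by
  rw [integrable_fun_norm_addHaar μ]
  exact (integrableOn_Ioi_brokenPower hR hs₁ hs₂).congr_fun
    (fun r hr => (pow_smul_brokenPower_sub finrank_pos hr).symm) measurableSet_Ioi

lemma integral_brokenPower_norm (hR : 0 < R) (hs₁ : 0 < s₁) (hs₂ : s₂ < 0) :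
    ∫ z : E, brokenPower R K₁ (s₁ - finrank ℝ E) K₂ (s₂ - finrank ℝ E) ‖z‖ ∂μ
      = finrank ℝ E * μ.real (ball 0 1) * (K₁ * R ^ s₁ / s₁ - K₂ * R ^ s₂ / s₂) := by
  rw [integral_fun_norm_addHaar μ, setIntegral_congr_fun measurableSet_Ioi
    (fun r hr => pow_smul_brokenPower_sub finrank_pos hr),
    integral_Ioi_brokenPower hR hs₁ hs₂, nsmul_eq_mul, smul_eq_mul, mul_assoc]

end BrokenPower

lemma integral_mono_of_nonneg_right {X : Type*} [MeasurableSpace X] {μ : Measure X}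
    {f g : X → ℝ} (hg : Integrable g μ) (hg0 : 0 ≤ᵐ[μ] g) (hfg : f ≤ᵐ[μ] g) :
    ∫ a, f a ∂μ ≤ ∫ a, g a ∂μ := by
  by_cases hf : Integrable f μ
  · exact integral_mono_ae hf hg hfg
  · rw [integral_undef hf]
    exact integral_nonneg_of_ae hg0

lemma EuclideanSpace.card_mul_volume_real_ball_zero_one (ι : Type*) [Fintype ι] :
    Fintype.card ι * volume.real (ball (0 : EuclideanSpace ℝ ι) 1)
      = 2 * π ^ ((Fintype.card ι : ℝ) / 2) / Gamma (Fintype.card ι / 2) := by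
  cases isEmpty_or_nonempty ι
  · simp
  have hΓ : Gamma ((Fintype.card ι : ℝ) / 2 + 1)
      = Fintype.card ι / 2 * Gamma (Fintype.card ι / 2) := Gamma_add_one (by positivity)
  rw [measureReal_def, EuclideanSpace.volume_ball, ENNReal.ofReal_one, one_pow, one_mul,
    ENNReal.toReal_ofReal (by positivity), sqrt_eq_rpow, ← rpow_natCast, ← rpow_mul pi_pos.le, hΓ]
  field_simp

lemma rpow_mul_rpow_mul_sqrt_div_rpow {a c : ℝ} (ha : 0 < a) (hc : 0 < c) (u v s : ℝ) :
    a ^ u * c ^ v * (√c / a) ^ s = a ^ (u - s) * c ^ (v + s / 2) := by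
  rw [div_rpow (sqrt_nonneg c) ha.le, sqrt_eq_rpow, ← rpow_mul hc.le, rpow_sub ha, rpow_add hc]
  ring_nf

section SecondDifferenceIntegral

variable {E F : Type*} [NormedAddCommGroup E] [NormedSpace ℝ E]
  [NormedAddCommGroup F] [InnerProductSpace ℝ F] {m : ℝ}

lemma bracketPow_second_diff_mul_rpow_le_brokenPower (hm0 : 0 ≤ m) (hm2 : m ≤ 2) (A : E →L[ℝ] F)
    (x : F) (R t : ℝ) (z : E) :
    (bracketPow m (x + A z) + bracketPow m (x - A z) - 2 * bracketPow m x) * ‖z‖ ^ t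
      ≤ brokenPower R (m * (1 + ‖x‖ ^ 2) ^ (m / 2 - 1) * ‖A‖ ^ 2) (2 + t) (2 * ‖A‖ ^ m) (m + t)
        ‖z‖ := by
  have hz := norm_nonneg z
  have hAz := A.le_opNorm z
  unfold brokenPower
  split_ifs
  · calc _ ≤ (m * (1 + ‖x‖ ^ 2) ^ (m / 2 - 1) * ‖A‖ ^ 2 * ‖z‖ ^ (2 : ℝ)) * ‖z‖ ^ t := by
          gcongr
          calc _ ≤ m * (1 + ‖x‖ ^ 2) ^ (m / 2 - 1) * ‖A z‖ ^ 2 :=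
                bracketPow_second_diff_le_mul_sq hm0 hm2 x (A z)
            _ ≤ m * (1 + ‖x‖ ^ 2) ^ (m / 2 - 1) * (‖A‖ * ‖z‖) ^ 2 := by gcongr
            _ = _ := by rw [rpow_two]; ring
      _ ≤ _ := by rw [mul_assoc]; gcongr; exact le_rpow_add hz _ _
  · calc _ ≤ (2 * ‖A‖ ^ m * ‖z‖ ^ m) * ‖z‖ ^ t := by
          gcongr
          calc _ ≤ 2 * ‖A z‖ ^ m := bracketPow_second_diff_le_rpow hm0 hm2 x (A z)
            _ ≤ 2 * (‖A‖ * ‖z‖) ^ m := by gcongr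
            _ = _ := by rw [mul_rpow (norm_nonneg A) hz]; ring
      _ ≤ _ := by rw [mul_assoc]; gcongr; exact le_rpow_add hz _ _

variable [FiniteDimensional ℝ E] [MeasurableSpace E] [BorelSpace E] (μ : Measure E)
  [μ.IsAddHaarMeasure] {α : ℝ}

theorem integral_bracketPow_second_diff_le (hα2 : α < 2) (hm0 : 0 < m) (hmα : m < α)
    (A : E →L[ℝ] F) (x : F) :
    ∫ z, (bracketPow m (x + A z) + bracketPow m (x - A z) - 2 * bracketPow m x)
        * ‖z‖ ^ (-(finrank ℝ E + α)) ∂μ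
      ≤ finrank ℝ E * μ.real (ball 0 1) * (m / (2 - α) + 2 / (α - m)) * ‖A‖ ^ α
        * (1 + ‖x‖ ^ 2) ^ ((m - α) / 2) := by
  rcases eq_or_ne A 0 with rfl | hA
  · simp [zero_rpow (by linarith : α ≠ 0), ← two_mul]
  have : Nontrivial E := by
    obtain ⟨z, hz⟩ := DFunLike.ne_iff.1 hA
    exact nontrivial_of_ne z 0 fun h => hz (by simp [h])
  set d : ℝ := (finrank ℝ E : ℝ)
  set c := 1 + ‖x‖ ^ 2
  have hc : 0 < c := by positivity
  have hAn : 0 < ‖A‖ := norm_pos_iff.2 hA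
  set R := √c / ‖A‖
  have hR : 0 < R := by positivity
  have hK₁ : m * c ^ (m / 2 - 1) * ‖A‖ ^ 2 * R ^ (2 - α)
      = m * (‖A‖ ^ α * c ^ ((m - α) / 2)) := by
    calc _ = m * (‖A‖ ^ (2 : ℝ) * c ^ (m / 2 - 1) * R ^ (2 - α)) := by rw [rpow_two]; ring
      _ = _ := by rw [rpow_mul_rpow_mul_sqrt_div_rpow hAn hc]; ring_nf
  have hK₂ : 2 * ‖A‖ ^ m * R ^ (m - α) = 2 * (‖A‖ ^ α * c ^ ((m - α) / 2)) := by
    calc _ = 2 * (‖A‖ ^ m * c ^ (0 : ℝ) * R ^ (m - α)) := by rw [rpow_zero]; ring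
      _ = _ := by rw [rpow_mul_rpow_mul_sqrt_div_rpow hAn hc]; ring_nf
  set K₁ := m * c ^ (m / 2 - 1) * ‖A‖ ^ 2
  set K₂ := 2 * ‖A‖ ^ m
  have hmajorant (z : E) :
      (bracketPow m (x + A z) + bracketPow m (x - A z) - 2 * bracketPow m x) * ‖z‖ ^ (-(d + α))
        ≤ brokenPower R K₁ ((2 - α) - d) K₂ ((m - α) - d) ‖z‖ := by
    convert bracketPow_second_diff_mul_rpow_le_brokenPower hm0.le (by linarith) A x R _ z
      using 2 <;> ring
  have hαm : α - m ≠ 0 := by linarith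
  have hmα' : m - α ≠ 0 := by linarith
  have h2α : 2 - α ≠ 0 := by linarith
  calc _ ≤ ∫ z, brokenPower R K₁ ((2 - α) - d) K₂ ((m - α) - d) ‖z‖ ∂μ :=
        integral_mono_of_nonneg_right
          (integrable_brokenPower_norm μ hR (by linarith) (by linarith))
          (.of_forall fun z => brokenPower_nonneg (by positivity) (by positivity) (norm_nonneg z))
          (.of_forall hmajorant)
    _ = d * μ.real (ball 0 1) * (K₁ * R ^ (2 - α) / (2 - α) - K₂ * R ^ (m - α) / (m - α)) :=
        integral_brokenPower_norm μ hR (by linarith) (by linarith)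
    _ = _ := by
        rw [hK₁, hK₂]
        field_simp
        ring

end SecondDifferenceIntegral

theorem stmt_5_general (d : ℕ) (α m : ℝ) (hα2 : α < 2) (hm0 : 0 < m) (hmα : m < α)
    (A : EuclideanSpace ℝ (Fin d) →L[ℝ] EuclideanSpace ℝ (Fin d))
    (x : EuclideanSpace ℝ (Fin d)) :
    (1 / 2) * ∫ z : EuclideanSpace ℝ (Fin d),
        ((1 + ‖x + A z‖ ^ 2) ^ (m / 2) + (1 + ‖x - A z‖ ^ 2) ^ (m / 2)
            - 2 * (1 + ‖x‖ ^ 2) ^ (m / 2)) * ‖z‖ ^ (-((d : ℝ) + α))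
      ≤ (2 * Real.pi ^ ((d : ℝ) / 2) / Real.Gamma ((d : ℝ) / 2))
          * (m / (2 - α) + 2 ^ (1 + α) / (α - m)) * ‖A‖ ^ α
          * (1 + ‖x‖ ^ 2) ^ ((m - α) / 2) := by
  have hbound := integral_bracketPow_second_diff_le volume hα2 hm0 hmα A x
  have hsphere := EuclideanSpace.card_mul_volume_real_ball_zero_one (Fin d)
  rw [Fintype.card_fin] at hsphere
  rw [finrank_euclideanSpace_fin, hsphere] at hbound
  unfold bracketPow at hbound
  have hconst : 1 / 2 * (m / (2 - α) + 2 / (α - m)) ≤ m / (2 - α) + 2 ^ (1 + α) / (α - m) := by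
    have hfirst : 0 ≤ m / (2 - α) := div_nonneg hm0.le (by linarith)
    have hpow : 1 / (α - m) ≤ 2 ^ (1 + α) / (α - m) := by
      gcongr
      exact one_le_rpow one_le_two (by linarith)
    linarith [show 1 / 2 * (2 / (α - m)) = 1 / (α - m) by ring]
  have hS : 0 ≤ 2 * π ^ ((d : ℝ) / 2) / Gamma (d / 2) := by
    have := Gamma_nonneg_of_nonneg (s := (d : ℝ) / 2) (by positivity)
    positivity
  calc _ ≤ 1 / 2 * (2 * π ^ ((d : ℝ) / 2) / Gamma (d / 2) * (m / (2 - α) + 2 / (α - m))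
          * ‖A‖ ^ α * (1 + ‖x‖ ^ 2) ^ ((m - α) / 2)) := by gcongr
    _ = 2 * π ^ ((d : ℝ) / 2) / Gamma (d / 2) * (1 / 2 * (m / (2 - α) + 2 / (α - m)))
          * ‖A‖ ^ α * (1 + ‖x‖ ^ 2) ^ ((m - α) / 2) := by ring
    _ ≤ _ := by gcongr

theorem stmt_5 (d : ℕ) (α m : ℝ) (hα0 : 0 < α) (hα2 : α < 2) (hm0 : 0 < m) (hmα : m < α)
    (A : EuclideanSpace ℝ (Fin d) →L[ℝ] EuclideanSpace ℝ (Fin d))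
    (x : EuclideanSpace ℝ (Fin d)) :
    (1 / 2) * ∫ z : EuclideanSpace ℝ (Fin d),
        ((1 + ‖x + A z‖ ^ 2) ^ (m / 2) + (1 + ‖x - A z‖ ^ 2) ^ (m / 2)
            - 2 * (1 + ‖x‖ ^ 2) ^ (m / 2)) * ‖z‖ ^ (-((d : ℝ) + α))
      ≤ (2 * Real.pi ^ ((d : ℝ) / 2) / Real.Gamma ((d : ℝ) / 2))
          * (m / (2 - α) + 2 ^ (1 + α) / (α - m)) * ‖A‖ ^ α
          * (1 + ‖x‖ ^ 2) ^ ((m - α) / 2) :=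
  stmt_5_general d α m hα2 hm0 hmα A x
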